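/- One has the limit formula lim_{z₂ → x⁻²z₁} g(z₁/z₂)·ψ(x z₂/z₁) = 1/((x²;x^{2r})_∞ (x^{2r−2};x^{2r})_∞) · ({x⁴}{x⁸}{x^{2r}}{x^{2r+4}})/({x²}{x⁶}{x^{2r+2}}{x^{2r+6}}), where {a} := (a; x⁴,x⁴,x^{2r})_∞. -/

import Mathlib

noncomputable section

/-- q-Pochhammer symbol (a;p)_inf. -/
def qp (a p : ℝ) : ℝ := ∏' k : ℕ, (1 - a * p ^ k)

/-- Double q-Pochhammer symbol (a;p1,p2)_inf. -/
def qp2 (a p₁ p₂ : ℝ) : ℝ := ∏' k : ℕ × ℕ, (1 - a * p₁ ^ k.1 * p₂ ^ k.2)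

/-- Triple q-Pochhammer symbol (a;p1,p2,p3)_inf. -/
def qp3 (a p₁ p₂ p₃ : ℝ) : ℝ :=
  ∏' k : ℕ × ℕ × ℕ, (1 - a * p₁ ^ k.1 * p₂ ^ k.2.1 * p₃ ^ k.2.2)

/-- Theta function Θ_p(z). -/
def theta (p z : ℝ) : ℝ := qp z p * qp (p * z⁻¹) p * qp p p

/-- The bracket symbol [u]. -/
def br (x r u : ℝ) : ℝ := x ^ (u ^ 2 / r - u) * theta (x ^ (2 * r)) (x ^ (2 * u))

/-- The brace symbol {u}. -/
def cbr (x r u : ℝ) : ℝ := x ^ (u ^ 2 / r - u) * theta (x ^ (2 * r)) (-(x ^ (2 * u)))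

/-- The kernel function ψ. -/
def psi (x r t : ℝ) : ℝ :=
  qp2 (x ^ (2 * r + 3) * t) (x ^ 4) (x ^ (2 * r)) *
    qp2 (x ^ (2 * r + 3) * t⁻¹) (x ^ 4) (x ^ (2 * r)) /
  (qp2 (x * t) (x ^ 4) (x ^ (2 * r)) * qp2 (x * t⁻¹) (x ^ 4) (x ^ (2 * r)))

/-- The function g given by a ratio of triple infinite products. -/
def gg (x r z : ℝ) : ℝ :=
  (qp3 (x ^ 6 * z) (x ^ 4) (x ^ 4) (x ^ (2 * r)) *
    qp3 (x ^ 2 * z⁻¹) (x ^ 4) (x ^ 4) (x ^ (2 * r)) *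
    qp3 (x ^ (2 * r + 6) * z) (x ^ 4) (x ^ 4) (x ^ (2 * r)) *
    qp3 (x ^ (2 * r + 2) * z⁻¹) (x ^ 4) (x ^ 4) (x ^ (2 * r))) /
  (qp3 (x ^ 8 * z) (x ^ 4) (x ^ 4) (x ^ (2 * r)) *
    qp3 (x ^ 4 * z⁻¹) (x ^ 4) (x ^ 4) (x ^ (2 * r)) *
    qp3 (x ^ (2 * r + 4) * z) (x ^ 4) (x ^ 4) (x ^ (2 * r)) *
    qp3 (x ^ (2 * r) * z⁻¹) (x ^ 4) (x ^ 4) (x ^ (2 * r)))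

open Filter Topology

/-!
Substitute `z₂ = s z₀` with `z₀ = x⁻² z₁`, so that `z₁ / z₂ = x² / s` and `x z₂ / z₁ = s / x`.
The zero of `g` comes from the factor `1 - s` of `{s}` and the pole of `ψ` from the same factor
of `(s; x⁴, x^{2r})_∞`. Peeling off the first layer of the triple product,
`{s} = (s; x⁴, x^{2r})_∞ {x⁴ s}`, the two cancel exactly and leave an expression that is
continuous at `s = 1`, since every q-Pochhammer product is continuous in its first argument by
dominated convergence. Its value at `s = 1` is turned into the stated one by the same layer
identities `{a} = (a; x⁴, x^{2r})_∞ {x⁴ a}` and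
`(a; x⁴, x^{2r})_∞ = (a; x^{2r})_∞ (x⁴ a; x⁴, x^{2r})_∞`.
-/

open Set

section OneSubMul

variable {ι : Type*} {c : ι → ℝ}

theorem summable_norm_neg_mul (hc : Summable c) (a : ℝ) : Summable fun k => ‖-(a * c k)‖ := by
  simpa only [norm_neg, Real.norm_eq_abs] using (hc.mul_left a).abs

theorem multipliable_one_sub_mul (hc : Summable c) (a : ℝ) :
    Multipliable fun k => 1 - a * c k := by
  have h := multipliable_one_add_of_summable (summable_norm_neg_mul hc a)
  simpa only [← sub_eq_add_neg] using h

theorem continuous_tprod_one_sub_mul (hc : Summable c) :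
    Continuous fun a => ∏' k, (1 - a * c k) := by
  refine continuous_iff_continuousAt.2 fun a₀ => ?_
  have h := tendsto_tprod_one_add_of_dominated_convergence (𝓕 := 𝓝 a₀)
    (f := fun a k => -(a * c k)) (g := fun k => -(a₀ * c k))
    (bound := fun k => (|a₀| + 1) * |c k|) (hc.abs.mul_left _)
    (fun k => ((continuous_id.mul continuous_const).neg).tendsto a₀) ?_
  · simpa only [ContinuousAt, ← sub_eq_add_neg] using h
  filter_upwards [(continuous_abs.tendsto a₀).eventually (gt_mem_nhds (lt_add_one |a₀|))]
    with a ha k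
  rw [norm_neg, Real.norm_eq_abs, abs_mul]
  exact mul_le_mul_of_nonneg_right ha.le (abs_nonneg _)

theorem tprod_one_sub_mul_ne_zero (hc : Summable c) (hc₀ : ∀ k, 0 ≤ c k) (hc₁ : ∀ k, c k ≤ 1)
    {a : ℝ} (ha : a < 1) : ∏' k, (1 - a * c k) ≠ 0 := by
  have h := tprod_one_add_ne_zero_of_summable (fun k => ?_) (summable_norm_neg_mul hc a)
  · simpa only [← sub_eq_add_neg] using h
  have := hc₁ k
  nlinarith [mul_nonneg (sub_nonneg.2 ha.le) (hc₀ k)]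

end OneSubMul

section QPochhammer

variable {p p₁ p₂ p₃ : ℝ}

theorem summable_norm_pow (hp : |p| < 1) : Summable fun n : ℕ => ‖p ^ n‖ := by
  simpa only [norm_pow, Real.norm_eq_abs] using summable_geometric_of_lt_one (abs_nonneg p) hp

theorem summable_pow_mul_pow (hp₁ : |p₁| < 1) (hp₂ : |p₂| < 1) :
    Summable fun k : ℕ × ℕ => p₁ ^ k.1 * p₂ ^ k.2 :=
  summable_mul_of_summable_norm (summable_norm_pow hp₁) (summable_norm_pow hp₂)

theorem summable_pow_mul_pow_mul_pow (hp₁ : |p₁| < 1) (hp₂ : |p₂| < 1) (hp₃ : |p₃| < 1) :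
    Summable fun k : ℕ × ℕ × ℕ => p₁ ^ k.1 * (p₂ ^ k.2.1 * p₃ ^ k.2.2) :=
  summable_mul_of_summable_norm (summable_norm_pow hp₁) (summable_pow_mul_pow hp₂ hp₃).norm

theorem qp2_eq_tprod (a : ℝ) : qp2 a p₁ p₂ = ∏' k : ℕ × ℕ, (1 - a * (p₁ ^ k.1 * p₂ ^ k.2)) := by
  simp only [qp2, mul_assoc]

theorem qp3_eq_tprod (a : ℝ) :
    qp3 a p₁ p₂ p₃ = ∏' k : ℕ × ℕ × ℕ, (1 - a * (p₁ ^ k.1 * (p₂ ^ k.2.1 * p₃ ^ k.2.2))) := by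
  simp only [qp3, mul_assoc]

@[fun_prop]
theorem continuous_qp2 (hp₁ : |p₁| < 1) (hp₂ : |p₂| < 1) : Continuous fun a => qp2 a p₁ p₂ := by
  simpa only [qp2_eq_tprod] using continuous_tprod_one_sub_mul (summable_pow_mul_pow hp₁ hp₂)

@[fun_prop]
theorem continuous_qp3 (hp₁ : |p₁| < 1) (hp₂ : |p₂| < 1) (hp₃ : |p₃| < 1) :
    Continuous fun a => qp3 a p₁ p₂ p₃ := by
  simpa only [qp3_eq_tprod] using
    continuous_tprod_one_sub_mul (summable_pow_mul_pow_mul_pow hp₁ hp₂ hp₃)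

theorem hasProd_qp (hp : |p| < 1) (a : ℝ) : HasProd (fun n => 1 - a * p ^ n) (qp a p) :=
  (multipliable_one_sub_mul (summable_geometric_of_abs_lt_one hp) a).hasProd

theorem hasProd_qp2 (hp₁ : |p₁| < 1) (hp₂ : |p₂| < 1) (a : ℝ) :
    HasProd (fun i => qp (a * p₁ ^ i) p₂) (qp2 a p₁ p₂) := by
  rw [qp2_eq_tprod]
  refine (multipliable_one_sub_mul (summable_pow_mul_pow hp₁ hp₂) a).hasProd.prod_fiberwise
    fun i => ?_
  simpa only [mul_assoc] using hasProd_qp hp₂ (a * p₁ ^ i)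

theorem hasProd_qp3 (hp₁ : |p₁| < 1) (hp₂ : |p₂| < 1) (hp₃ : |p₃| < 1) (a : ℝ) :
    HasProd (fun i => qp2 (a * p₁ ^ i) p₂ p₃) (qp3 a p₁ p₂ p₃) := by
  rw [qp3_eq_tprod]
  refine (multipliable_one_sub_mul (summable_pow_mul_pow_mul_pow hp₁ hp₂ hp₃) a).hasProd
    |>.prod_fiberwise fun i => ?_
  rw [qp2_eq_tprod]
  simpa only [mul_assoc] using
    (multipliable_one_sub_mul (summable_pow_mul_pow hp₂ hp₃) (a * p₁ ^ i)).hasProd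

theorem qp_eq_one_sub_mul_qp (hp : |p| < 1) (a : ℝ) : qp a p = (1 - a) * qp (a * p) p := by
  rw [← (hasProd_qp hp a).tprod_eq, tprod_eq_zero_mul', ← (hasProd_qp hp (a * p)).tprod_eq]
  · simp only [pow_zero, mul_one, pow_succ', mul_assoc]
  · exact (hasProd_qp hp (a * p)).multipliable.congr fun n => by rw [pow_succ', mul_assoc]

theorem qp2_eq_qp_mul_qp2 (hp₁ : |p₁| < 1) (hp₂ : |p₂| < 1) (a : ℝ) :
    qp2 a p₁ p₂ = qp a p₂ * qp2 (a * p₁) p₁ p₂ := by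
  rw [← (hasProd_qp2 hp₁ hp₂ a).tprod_eq, tprod_eq_zero_mul',
    ← (hasProd_qp2 hp₁ hp₂ (a * p₁)).tprod_eq]
  · simp only [pow_zero, mul_one, pow_succ', mul_assoc]
  · exact (hasProd_qp2 hp₁ hp₂ (a * p₁)).multipliable.congr fun n => by rw [pow_succ', mul_assoc]

theorem qp3_eq_qp2_mul_qp3 (hp₁ : |p₁| < 1) (hp₂ : |p₂| < 1) (hp₃ : |p₃| < 1) (a : ℝ) :
    qp3 a p₁ p₂ p₃ = qp2 a p₂ p₃ * qp3 (a * p₁) p₁ p₂ p₃ := by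
  rw [← (hasProd_qp3 hp₁ hp₂ hp₃ a).tprod_eq, tprod_eq_zero_mul',
    ← (hasProd_qp3 hp₁ hp₂ hp₃ (a * p₁)).tprod_eq]
  · simp only [pow_zero, mul_one, pow_succ', mul_assoc]
  · exact (hasProd_qp3 hp₁ hp₂ hp₃ (a * p₁)).multipliable.congr fun n => by
      rw [pow_succ', mul_assoc]

end QPochhammer

section NeZero

variable {p p₁ p₂ p₃ a : ℝ}

theorem abs_lt_one_of_mem_Ico (hp : p ∈ Ico (0 : ℝ) 1) : |p| < 1 :=
  abs_lt.2 ⟨by linarith [hp.1], hp.2⟩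

theorem pow_mem_Icc_of_mem_Ico (hp : p ∈ Ico (0 : ℝ) 1) (n : ℕ) : p ^ n ∈ Icc (0 : ℝ) 1 :=
  ⟨pow_nonneg hp.1 n, pow_le_one₀ hp.1 hp.2.le⟩

theorem qp_ne_zero (hp : p ∈ Ico (0 : ℝ) 1) (ha : a < 1) : qp a p ≠ 0 :=
  tprod_one_sub_mul_ne_zero (summable_geometric_of_abs_lt_one (abs_lt_one_of_mem_Ico hp))
    (fun n => (pow_mem_Icc_of_mem_Ico hp n).1) (fun n => (pow_mem_Icc_of_mem_Ico hp n).2) ha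

theorem qp2_ne_zero (hp₁ : p₁ ∈ Ico (0 : ℝ) 1) (hp₂ : p₂ ∈ Ico (0 : ℝ) 1) (ha : a < 1) :
    qp2 a p₁ p₂ ≠ 0 := by
  rw [qp2_eq_tprod]
  refine tprod_one_sub_mul_ne_zero
    (summable_pow_mul_pow (abs_lt_one_of_mem_Ico hp₁) (abs_lt_one_of_mem_Ico hp₂))
    (fun k => ?_) (fun k => ?_) ha
  · exact mul_nonneg (pow_mem_Icc_of_mem_Ico hp₁ _).1 (pow_mem_Icc_of_mem_Ico hp₂ _).1
  · exact mul_le_one₀ (pow_mem_Icc_of_mem_Ico hp₁ _).2 (pow_mem_Icc_of_mem_Ico hp₂ _).1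
      (pow_mem_Icc_of_mem_Ico hp₂ _).2

theorem qp3_ne_zero (hp₁ : p₁ ∈ Ico (0 : ℝ) 1) (hp₂ : p₂ ∈ Ico (0 : ℝ) 1)
    (hp₃ : p₃ ∈ Ico (0 : ℝ) 1) (ha : a < 1) : qp3 a p₁ p₂ p₃ ≠ 0 := by
  rw [qp3_eq_tprod]
  refine tprod_one_sub_mul_ne_zero
    (summable_pow_mul_pow_mul_pow (abs_lt_one_of_mem_Ico hp₁) (abs_lt_one_of_mem_Ico hp₂)
      (abs_lt_one_of_mem_Ico hp₃)) (fun k => ?_) (fun k => ?_) ha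
  · exact mul_nonneg (pow_mem_Icc_of_mem_Ico hp₁ _).1
      (mul_nonneg (pow_mem_Icc_of_mem_Ico hp₂ _).1 (pow_mem_Icc_of_mem_Ico hp₃ _).1)
  · exact mul_le_one₀ (pow_mem_Icc_of_mem_Ico hp₁ _).2
      (mul_nonneg (pow_mem_Icc_of_mem_Ico hp₂ _).1 (pow_mem_Icc_of_mem_Ico hp₃ _).1)
      (mul_le_one₀ (pow_mem_Icc_of_mem_Ico hp₂ _).2 (pow_mem_Icc_of_mem_Ico hp₃ _).1
        (pow_mem_Icc_of_mem_Ico hp₃ _).2)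

theorem qp2_ne_zero_of_ne_one (hp₁ : p₁ ∈ Ico (0 : ℝ) 1) (hp₂ : p₂ ∈ Ico (0 : ℝ) 1)
    (ha : a ≠ 1) (ha₁ : a * p₁ < 1) (ha₂ : a * p₂ < 1) : qp2 a p₁ p₂ ≠ 0 := by
  rw [qp2_eq_qp_mul_qp2 (abs_lt_one_of_mem_Ico hp₁) (abs_lt_one_of_mem_Ico hp₂),
    qp_eq_one_sub_mul_qp (abs_lt_one_of_mem_Ico hp₂)]
  exact mul_ne_zero (mul_ne_zero (sub_ne_zero.2 ha.symm) (qp_ne_zero hp₂ ha₂))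
    (qp2_ne_zero hp₁ hp₂ ha₁)

end NeZero

/-- `g(x²/s) ψ(s/x)` with `b` standing for `x^{2r}`, after cancelling the factor
`(s; x⁴, b)_∞` shared by `{s} = (s; x⁴, b)_∞ {x⁴ s}` in `g` and by the denominator of `ψ`. -/
def ggPsiReg (x b s : ℝ) : ℝ :=
  qp3 (x ^ 8 / s) (x ^ 4) (x ^ 4) b * qp3 (x ^ 4 * s) (x ^ 4) (x ^ 4) b *
      qp3 (b * x ^ 8 / s) (x ^ 4) (x ^ 4) b * qp3 (b * s) (x ^ 4) (x ^ 4) b /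
    (qp3 (x ^ 10 / s) (x ^ 4) (x ^ 4) b * qp3 (x ^ 2 * s) (x ^ 4) (x ^ 4) b *
      qp3 (b * x ^ 6 / s) (x ^ 4) (x ^ 4) b * qp3 (b / x ^ 2 * s) (x ^ 4) (x ^ 4) b) *
    (qp2 (b * x ^ 2 * s) (x ^ 4) b * qp2 (b * x ^ 4 / s) (x ^ 4) b / qp2 (x ^ 2 / s) (x ^ 4) b)

section GgPsi

variable {x r : ℝ}

theorem gg_sq_div (hx : 0 < x) (s : ℝ) :
    gg x r (x ^ 2 / s) =
      qp3 (x ^ 8 / s) (x ^ 4) (x ^ 4) (x ^ (2 * r)) * qp3 s (x ^ 4) (x ^ 4) (x ^ (2 * r)) *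
        qp3 (x ^ (2 * r) * x ^ 8 / s) (x ^ 4) (x ^ 4) (x ^ (2 * r)) *
        qp3 (x ^ (2 * r) * s) (x ^ 4) (x ^ 4) (x ^ (2 * r)) /
      (qp3 (x ^ 10 / s) (x ^ 4) (x ^ 4) (x ^ (2 * r)) *
        qp3 (x ^ 2 * s) (x ^ 4) (x ^ 4) (x ^ (2 * r)) *
        qp3 (x ^ (2 * r) * x ^ 6 / s) (x ^ 4) (x ^ 4) (x ^ (2 * r)) *
        qp3 (x ^ (2 * r) / x ^ 2 * s) (x ^ 4) (x ^ 4) (x ^ (2 * r))) := by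
  have := hx.ne'
  simp only [gg, Real.rpow_add hx, Real.rpow_ofNat, inv_div]
  field_simp

theorem psi_div (hx : 0 < x) (s : ℝ) :
    psi x r (s / x) =
      qp2 (x ^ (2 * r) * x ^ 2 * s) (x ^ 4) (x ^ (2 * r)) *
        qp2 (x ^ (2 * r) * x ^ 4 / s) (x ^ 4) (x ^ (2 * r)) /
      (qp2 s (x ^ 4) (x ^ (2 * r)) * qp2 (x ^ 2 / s) (x ^ 4) (x ^ (2 * r))) := by
  have := hx.ne'
  simp only [psi, Real.rpow_add hx, Real.rpow_ofNat, inv_div]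
  field_simp

theorem gg_mul_psi_eq_ggPsiReg {s : ℝ} (hx0 : 0 < x) (hx1 : x < 1) (hr : 0 < r)
    (hs : qp2 s (x ^ 4) (x ^ (2 * r)) ≠ 0) :
    gg x r (x ^ 2 / s) * psi x r (s / x) = ggPsiReg x (x ^ (2 * r)) s := by
  have hP : |x ^ 4| < 1 := by
    rw [abs_of_pos (by positivity)]; exact pow_lt_one₀ hx0.le hx1 (by norm_num)
  have hB : |x ^ (2 * r)| < 1 := by
    rw [abs_of_pos (Real.rpow_pos_of_pos hx0 _)]; exact Real.rpow_lt_one hx0.le hx1 (by positivity)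
  have cancel (A n C D E P Q R : ℝ) :
      A * (qp2 s (x ^ 4) (x ^ (2 * r)) * n) * C * D / E *
        (P * Q / (qp2 s (x ^ 4) (x ^ (2 * r)) * R)) = A * n * C * D / E * (P * Q / R) := by
    field_simp
  rw [gg_sq_div hx0, psi_div hx0, qp3_eq_qp2_mul_qp3 hP hP hB s, mul_comm s, ggPsiReg]
  exact cancel ..

end GgPsi

section Regularized

variable {x b : ℝ}

theorem ggPsiReg_one (hx0 : 0 < x) (hx1 : x < 1) (hb0 : 0 ≤ b) (hb : b < x ^ 2) :
    ggPsiReg x b 1 =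
      1 / (qp (x ^ 2) b * qp (b / x ^ 2) b) *
        (qp3 (x ^ 4) (x ^ 4) (x ^ 4) b * qp3 (x ^ 8) (x ^ 4) (x ^ 4) b *
          qp3 b (x ^ 4) (x ^ 4) b * qp3 (b * x ^ 4) (x ^ 4) (x ^ 4) b) /
        (qp3 (x ^ 2) (x ^ 4) (x ^ 4) b * qp3 (x ^ 6) (x ^ 4) (x ^ 4) b *
          qp3 (b * x ^ 2) (x ^ 4) (x ^ 4) b * qp3 (b * x ^ 6) (x ^ 4) (x ^ 4) b) := by
  have hx := hx0.ne'
  have hxn : ∀ {n : ℕ}, n ≠ 0 → x ^ n < 1 := pow_lt_one₀ hx0.le hx1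
  have hP : x ^ 4 ∈ Ico (0 : ℝ) 1 := ⟨by positivity, hxn (by norm_num)⟩
  have hB : b ∈ Ico (0 : ℝ) 1 := ⟨hb0, hb.trans (hxn (by norm_num))⟩
  have hP' := abs_lt_one_of_mem_Ico hP
  have hB' := abs_lt_one_of_mem_Ico hB
  have e₁ := qp3_eq_qp2_mul_qp3 hP' hP' hB' (b / x ^ 2)
  have e₂ := qp2_eq_qp_mul_qp2 hP' hB' (b / x ^ 2)
  rw [show b / x ^ 2 * x ^ 4 = b * x ^ 2 by field_simp] at e₁ e₂
  have e₃ := qp3_eq_qp2_mul_qp3 hP' hP' hB' (x ^ 6)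
  rw [show x ^ 6 * x ^ 4 = x ^ 10 by ring] at e₃
  have e₄ := qp3_eq_qp2_mul_qp3 hP' hP' hB' (b * x ^ 4)
  rw [show b * x ^ 4 * x ^ 4 = b * x ^ 8 by ring] at e₄
  have e₅ := qp2_eq_qp_mul_qp2 hP' hB' (x ^ 2)
  rw [show x ^ 2 * x ^ 4 = x ^ 6 by ring] at e₅
  simp only [ggPsiReg, mul_one, div_one]
  rw [e₁, e₂, e₃, e₄, e₅]
  have hQ : qp2 (b * x ^ 2) (x ^ 4) b ≠ 0 :=
    qp2_ne_zero hP hB (mul_lt_one_of_nonneg_of_lt_one_left hb0 hB.2 (hxn (by norm_num)).le)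
  -- `field_simp` would rewrite the argument `b * x ^ 2` and miss that this factor is nonzero
  generalize qp2 (b * x ^ 2) (x ^ 4) b = Q at hQ ⊢
  field_simp [qp3_ne_zero (a := x ^ 10) hP hP hB (hxn (by norm_num)),
    qp3_ne_zero (a := x ^ 2) hP hP hB (hxn (by norm_num)),
    qp2_ne_zero (a := x ^ 6) hP hB (hxn (by norm_num)),
    qp_ne_zero (a := x ^ 2) hB (hxn (by norm_num)),
    qp_ne_zero hB ((div_lt_one (by positivity)).2 hb)]

theorem continuousAt_ggPsiReg_one (hx0 : 0 < x) (hx1 : x < 1) (hb0 : 0 ≤ b) (hb : b < x ^ 2) :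
    ContinuousAt (ggPsiReg x b) 1 := by
  have hxn : ∀ {n : ℕ}, n ≠ 0 → x ^ n < 1 := pow_lt_one₀ hx0.le hx1
  have hP : x ^ 4 ∈ Ico (0 : ℝ) 1 := ⟨by positivity, hxn (by norm_num)⟩
  have hB : b ∈ Ico (0 : ℝ) 1 := ⟨hb0, hb.trans (hxn (by norm_num))⟩
  have hP' := abs_lt_one_of_mem_Ico hP
  have hB' := abs_lt_one_of_mem_Ico hB
  have hden₃ : qp3 (x ^ 10 / 1) (x ^ 4) (x ^ 4) b * qp3 (x ^ 2 * 1) (x ^ 4) (x ^ 4) b *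
      qp3 (b * x ^ 6 / 1) (x ^ 4) (x ^ 4) b * qp3 (b / x ^ 2 * 1) (x ^ 4) (x ^ 4) b ≠ 0 := by
    simp only [mul_one, div_one]
    refine mul_ne_zero (mul_ne_zero (mul_ne_zero ?_ ?_) ?_) ?_ <;> refine qp3_ne_zero hP hP hB ?_
    · exact hxn (by norm_num)
    · exact hxn (by norm_num)
    · exact mul_lt_one_of_nonneg_of_lt_one_left hb0 hB.2 (hxn (by norm_num)).le
    · exact (div_lt_one (by positivity)).2 hb
  have hden₂ : qp2 (x ^ 2 / 1) (x ^ 4) b ≠ 0 := by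
    rw [div_one]; exact qp2_ne_zero hP hB (hxn (by norm_num))
  unfold ggPsiReg
  fun_prop (disch := first | assumption | norm_num)

end Regularized

theorem rpow_two_mul_lt_sq {x r : ℝ} (hx0 : 0 < x) (hx1 : x < 1) (hr : 1 < r) :
    x ^ (2 * r) < x ^ 2 := by
  simpa using Real.rpow_lt_rpow_of_exponent_gt hx0 hx1 (show (2 : ℝ) < 2 * r by linarith)

theorem tendsto_gg_mul_psi {x r : ℝ} (hx0 : 0 < x) (hx1 : x < 1) (hr : 1 < r) :
    Tendsto (fun s => gg x r (x ^ 2 / s) * psi x r (s / x)) (𝓝[≠] 1)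
      (𝓝 (ggPsiReg x (x ^ (2 * r)) 1)) := by
  have hP : x ^ 4 ∈ Ico (0 : ℝ) 1 := ⟨by positivity, pow_lt_one₀ hx0.le hx1 (by norm_num)⟩
  have hb := rpow_two_mul_lt_sq hx0 hx1 hr
  have hB : x ^ (2 * r) ∈ Ico (0 : ℝ) 1 :=
    ⟨(Real.rpow_pos_of_pos hx0 _).le, hb.trans (pow_lt_one₀ hx0.le hx1 (by norm_num))⟩
  have hsP : ∀ᶠ s in 𝓝[≠] (1 : ℝ), s * x ^ 4 < 1 :=
    (((continuous_mul_const _).tendsto' 1 _ (one_mul _)).mono_left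
      nhdsWithin_le_nhds).eventually_lt_const hP.2
  have hsB : ∀ᶠ s in 𝓝[≠] (1 : ℝ), s * x ^ (2 * r) < 1 :=
    (((continuous_mul_const _).tendsto' 1 _ (one_mul _)).mono_left
      nhdsWithin_le_nhds).eventually_lt_const hB.2
  refine ((continuousAt_ggPsiReg_one hx0 hx1 hB.1 hb).tendsto.mono_left
    nhdsWithin_le_nhds).congr' ?_
  filter_upwards [self_mem_nhdsWithin, hsP, hsB] with s hs hsP hsB
  exact (gg_mul_psi_eq_ggPsiReg hx0 hx1 (by linarith)
    (qp2_ne_zero_of_ne_one hP hB hs hsP hsB)).symm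

/-- The limit formula for g(z₁/z₂) ψ(x z₂/z₁) as z₂ → x⁻² z₁. -/
theorem g_psi_limit (x r z₁ : ℝ) (hx0 : 0 < x) (hx1 : x < 1) (hr : 1 < r) (hz : 0 < z₁) :
    Tendsto (fun z₂ : ℝ => gg x r (z₁ / z₂) * psi x r (x * z₂ / z₁))
      (𝓝[≠] ((x ^ 2)⁻¹ * z₁))
      (𝓝 (1 / (qp (x ^ 2) (x ^ (2 * r)) * qp (x ^ (2 * r - 2)) (x ^ (2 * r))) *
        (qp3 (x ^ 4) (x ^ 4) (x ^ 4) (x ^ (2 * r)) * qp3 (x ^ 8) (x ^ 4) (x ^ 4) (x ^ (2 * r)) *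
          qp3 (x ^ (2 * r)) (x ^ 4) (x ^ 4) (x ^ (2 * r)) *
          qp3 (x ^ (2 * r + 4)) (x ^ 4) (x ^ 4) (x ^ (2 * r))) /
        (qp3 (x ^ 2) (x ^ 4) (x ^ 4) (x ^ (2 * r)) * qp3 (x ^ 6) (x ^ 4) (x ^ 4) (x ^ (2 * r)) *
          qp3 (x ^ (2 * r + 2)) (x ^ 4) (x ^ 4) (x ^ (2 * r)) *
          qp3 (x ^ (2 * r + 6)) (x ^ 4) (x ^ 4) (x ^ (2 * r))))) := by
  set z₀ := (x ^ 2)⁻¹ * z₁ with hz₀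
  have hz₀0 : z₀ ≠ 0 := by positivity
  have hx := hx0.ne'
  have hscale : Tendsto (fun z₂ => z₂ / z₀) (𝓝[≠] z₀) (𝓝[≠] 1) := by
    refine tendsto_nhdsWithin_of_tendsto_nhds_of_eventually_within _ ?_ ?_
    · exact ((continuous_id.div_const z₀).tendsto' z₀ 1 (div_self hz₀0)).mono_left
        nhdsWithin_le_nhds
    · filter_upwards [self_mem_nhdsWithin] with z₂ hz₂
      exact fun h => hz₂ ((div_eq_one_iff_eq hz₀0).1 h)
  have key := (tendsto_gg_mul_psi hx0 hx1 hr).comp hscale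
  rw [ggPsiReg_one hx0 hx1 (Real.rpow_pos_of_pos hx0 _).le
    (rpow_two_mul_lt_sq hx0 hx1 hr)] at key
  convert key using 2
  · simp only [Function.comp_apply]
    congr 2 <;> rw [hz₀] <;> field_simp
  · simp only [Real.rpow_add hx0, Real.rpow_sub hx0, Real.rpow_ofNat]
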